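/- arXiv:1901.03917 — 2 statements merged into one kernel-verified Lean document; each statement's English description precedes it below -/
import Mathlib

section
/- For every n ≥ 4, each vertex of the Bubble-sort graph BS_n lies on exactly (n−2)(n−3)/2 distinct 4-cycles (cycles counted as subgraphs, i.e. up to choice of starting vertex and direction). -/
/-- The adjacent transposition `b_i` (1-indexed, swapping positions `i` and `i+1`,
i.e. the 0-indexed positions `i-1` and `i` of `Fin n`), extended by `1` outside
the valid range `1 ≤ i ≤ n-1`. -/
def bsGen (n i : ℕ) : Equiv.Perm (Fin n) :=
  if h : 0 < i ∧ i < n then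
    Equiv.swap ⟨i - 1, lt_of_le_of_lt (Nat.pred_le i) h.2⟩ ⟨i, h.2⟩
  else 1

theorem bsGen_ne_one (n i : ℕ) (h1 : 0 < i) (h2 : i < n) : bsGen n i ≠ 1 := by
  rw [bsGen, dif_pos ⟨h1, h2⟩]
  intro h
  have h' := congrArg Fin.val (Equiv.swap_eq_one_iff.mp h)
  simp at h'
  omega

theorem bsGen_mul_self (n i : ℕ) : bsGen n i * bsGen n i = 1 := by
  rw [bsGen]; split
  · exact Equiv.swap_mul_self _ _
  · simp

/-- The Bubble-sort graph `BS_n` on the symmetric group `Sym_n = Equiv.Perm (Fin n)`: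
`π` and `τ` are adjacent iff `τ = π * b_i` for some `1 ≤ i ≤ n-1`. -/
def BS (n : ℕ) : SimpleGraph (Equiv.Perm (Fin n)) where
  Adj π τ := ∃ i, 0 < i ∧ i < n ∧ τ = π * bsGen n i
  symm := by
    refine ⟨?_⟩
    rintro π τ ⟨i, h1, h2, rfl⟩
    exact ⟨i, h1, h2, by rw [mul_assoc, bsGen_mul_self, mul_one]⟩
  loopless := by
    refine ⟨?_⟩
    rintro π ⟨i, h1, h2, h⟩
    exact bsGen_ne_one n i h1 h2 (mul_left_cancel (h.symm.trans (mul_one π).symm))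

/-- `H` is an `ℓ`-cycle subgraph of `BS n`: the subgraph traced by some cycle walk
with `ℓ` vertices (equivalently, of length `ℓ`).  Since a cycle subgraph determines
the traversal up to starting vertex and direction, counting such subgraphs counts
cycles once regardless of starting vertex and direction. -/
def IsCycleSub {n : ℕ} (H : (BS n).Subgraph) (ℓ : ℕ) : Prop :=
  ∃ (u : Equiv.Perm (Fin n)) (w : (BS n).Walk u u),
    w.IsCycle ∧ w.length = ℓ ∧ H = w.toSubgraph

/-!
Read from `π`, a 4-cycle is `π, πa, πab, πabc` with `abcd = 1` for adjacent transpositions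
`a, b, c, d`, where `a ≠ b`, `c ≠ d`, `a ≠ d` because its vertices are distinct. For adjacent
transpositions, `ab = dc` then forces `c = a`, `d = b` and `ab = ba`, i.e. `a = b_i`, `b = b_j`
with `|i - j| ≥ 2`. Hence the 4-cycles through `π` are exactly the squares
`π, πb_i, πb_ib_j, πb_j` with `1 ≤ i`, `i + 2 ≤ j ≤ n - 1`; distinct pairs `(i, j)` give distinct
squares because the neighbours of `π` in them differ, and there are `(n - 2).choose 2` such pairs.
-/

namespace SimpleGraph.Walk

variable {V : Type*} {G : SimpleGraph V} {p q r s : V}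

def square (hpq : G.Adj p q) (hqr : G.Adj q r) (hrs : G.Adj r s) (hsp : G.Adj s p) :
    G.Walk p p :=
  cons hpq (cons hqr (cons hrs (cons hsp nil)))

theorem IsCycle.exists_square {u : V} {w : G.Walk u u} (hw : w.IsCycle) (h4 : w.length = 4)
    (hp : p ∈ w.support) :
    ∃ (q r s : V) (hpq : G.Adj p q) (hqr : G.Adj q r) (hrs : G.Adj r s) (hsp : G.Adj s p),
      p ≠ r ∧ q ≠ s ∧ w.toSubgraph = (square hpq hqr hrs hsp).toSubgraph := by
  classical
  rw [← toSubgraph_rotate w hp]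
  have hc := hw.rotate hp
  have hc4 : (w.rotate p hp).length = 4 := by rw [length_rotate, h4]
  generalize w.rotate p hp = c at hc hc4
  match c, hc, hc4 with
  | cons hpq (cons hqr (cons hrs (cons hsp nil))), hc, _ =>
    have hnd := hc.support_nodup
    simp only [support_cons, support_nil, List.tail_cons, List.nodup_cons, List.mem_cons,
      List.not_mem_nil] at hnd
    exact ⟨_, _, _, hpq, hqr, hrs, hsp, by grind, by grind, rfl⟩

variable (hpq : G.Adj p q) (hqr : G.Adj q r) (hrs : G.Adj r s) (hsp : G.Adj s p)

theorem reverse_square :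
    (square hpq hqr hrs hsp).reverse = square hsp.symm hrs.symm hqr.symm hpq.symm := rfl

theorem toSubgraph_square_comm :
    (square hpq hqr hrs hsp).toSubgraph
      = (square hsp.symm hrs.symm hqr.symm hpq.symm).toSubgraph := by
  rw [← reverse_square, toSubgraph_reverse]

theorem isCycle_square (hpr : p ≠ r) (hqs : q ≠ s) : (square hpq hqr hrs hsp).IsCycle := by
  refine (cons_isCycle_iff _ hpq).2 ⟨IsPath.mk' ?_, ?_⟩
  · simp only [support_cons, support_nil, List.nodup_cons, List.mem_cons, List.not_mem_nil,
      List.nodup_nil]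
    grind [hpq.ne, hqr.ne, hrs.ne, hsp.ne]
  · simp only [edges_cons, edges_nil, List.mem_cons, List.not_mem_nil, Sym2.eq_iff]
    grind [hpq.ne, hqr.ne]

theorem neighborSet_toSubgraph_square (hpr : p ≠ r) :
    (square hpq hqr hrs hsp).toSubgraph.neighborSet p = {q, s} := by
  ext x
  simp only [square, Subgraph.mem_neighborSet, adj_toSubgraph_iff_mem_edges, edges_cons,
    edges_nil, List.mem_cons, List.not_mem_nil, Sym2.eq_iff, Set.mem_insert_iff,
    Set.mem_singleton_iff]
  grind [hpq.ne, hsp.ne]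

end SimpleGraph.Walk

open Equiv SimpleGraph

theorem swap_self_add_one_apply_cases (i x : ℕ) :
    (x = i ∧ swap i (i + 1) x = i + 1) ∨ (x = i + 1 ∧ swap i (i + 1) x = i) ∨
      (x ≠ i ∧ x ≠ i + 1 ∧ swap i (i + 1) x = x) := by
  rw [swap_apply_def]
  split_ifs <;> simp_all

/-- Comparing `s_a s_b` and `s_d s_c` (with `s_k = swap k (k + 1)`) at the two points `a + 1`
and `d + 1` already pins down the relation. -/
theorem eq_of_swap_swap_apply_eq {a b c d : ℕ} (hcd : c ≠ d) (had : a ≠ d)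
    (ha : swap a (a + 1) (swap b (b + 1) (a + 1)) = swap d (d + 1) (swap c (c + 1) (a + 1)))
    (hd : swap a (a + 1) (swap b (b + 1) (d + 1)) = swap d (d + 1) (swap c (c + 1) (d + 1))) :
    b = d ∧ c = a ∧ (a + 2 ≤ b ∨ b + 2 ≤ a) := by
  have := swap_self_add_one_apply_cases b (a + 1)
  have := swap_self_add_one_apply_cases a (swap b (b + 1) (a + 1))
  have := swap_self_add_one_apply_cases c (a + 1)
  have := swap_self_add_one_apply_cases d (swap c (c + 1) (a + 1))
  have := swap_self_add_one_apply_cases b (d + 1)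
  have := swap_self_add_one_apply_cases a (swap b (b + 1) (d + 1))
  have := swap_self_add_one_apply_cases c (d + 1)
  have := swap_self_add_one_apply_cases d (swap c (c + 1) (d + 1))
  omega

section BubbleSort

variable {n i j : ℕ}

theorem bsGen_add_one_apply_val (h : i + 1 < n) (x : Fin n) :
    (bsGen n (i + 1) x : ℕ) = swap i (i + 1) (x : ℕ) := by
  rw [bsGen, dif_pos ⟨i.succ_pos, h⟩, swap_apply_def, swap_apply_def]
  split_ifs <;> simp_all [Fin.ext_iff]

theorem exists_bsGen_eq_swap (hi : 0 < i) (hin : i < n) :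
    ∃ k, i = k + 1 ∧ ∀ x : Fin n, (bsGen n i x : ℕ) = swap k (k + 1) (x : ℕ) := by
  obtain ⟨k, rfl⟩ := Nat.exists_eq_add_one_of_ne_zero hi.ne'
  exact ⟨k, rfl, bsGen_add_one_apply_val hin⟩

theorem bsGen_inj (hi : 0 < i) (hin : i < n) (hj : 0 < j) (hjn : j < n) :
    bsGen n i = bsGen n j ↔ i = j := by
  refine ⟨fun h => ?_, congrArg _⟩
  obtain ⟨k, rfl, hk⟩ := exists_bsGen_eq_swap hi hin
  obtain ⟨l, rfl, hl⟩ := exists_bsGen_eq_swap hj hjn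
  have := congrArg (fun σ : Perm (Fin n) => (σ ⟨k, by omega⟩ : ℕ)) h
  simp only [hk, hl, swap_apply_left] at this
  rw [swap_apply_def] at this
  split_ifs at this <;> omega

theorem bsGen_inv (n i : ℕ) : (bsGen n i)⁻¹ = bsGen n i :=
  inv_eq_of_mul_eq_one_right (bsGen_mul_self n i)

theorem bsGen_mul_bsGen_ne_one (hi : 0 < i) (hin : i < n) (hj : 0 < j) (hjn : j < n)
    (hij : i ≠ j) : bsGen n i * bsGen n j ≠ 1 := by
  rw [Ne, mul_eq_one_iff_eq_inv, bsGen_inv, bsGen_inj hi hin hj hjn]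
  exact hij

theorem bsGen_commute (hi : 0 < i) (hij : i + 2 ≤ j) (hjn : j < n) :
    Commute (bsGen n i) (bsGen n j) := by
  rw [bsGen, bsGen, dif_pos ⟨hi, by omega⟩, dif_pos ⟨by omega, hjn⟩]
  exact (Perm.disjoint_swap_swap (by simp [Fin.ext_iff]; omega)).commute

theorem eq_of_bsGen_mul_bsGen_eq {a b c d : ℕ} (ha : 0 < a) (han : a < n) (hb : 0 < b)
    (hbn : b < n) (hc : 0 < c) (hcn : c < n) (hd : 0 < d) (hdn : d < n) (hcd : c ≠ d)
    (had : a ≠ d) (h : bsGen n a * bsGen n b = bsGen n d * bsGen n c) :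
    b = d ∧ c = a ∧ (a + 2 ≤ b ∨ b + 2 ≤ a) := by
  obtain ⟨a, rfl, ha⟩ := exists_bsGen_eq_swap ha han
  obtain ⟨b, rfl, hb⟩ := exists_bsGen_eq_swap hb hbn
  obtain ⟨c, rfl, hc⟩ := exists_bsGen_eq_swap hc hcn
  obtain ⟨d, rfl, hd⟩ := exists_bsGen_eq_swap hd hdn
  have hval (x : Fin n) := congrArg (fun σ : Perm (Fin n) => (σ x : ℕ)) h
  simp only [Perm.mul_apply, ha, hb, hc, hd] at hval
  have := eq_of_swap_swap_apply_eq (by omega) (by omega) (hval ⟨a + 1, han⟩) (hval ⟨d + 1, hdn⟩)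
  omega

theorem bs_adj_mul (hi : 0 < i) (hin : i < n) (π : Perm (Fin n)) :
    (BS n).Adj π (π * bsGen n i) :=
  ⟨i, hi, hin, rfl⟩

theorem bs_adj_mul_mul_of_commute (hi : 0 < i) (hin : i < n)
    (h : Commute (bsGen n i) (bsGen n j)) (π : Perm (Fin n)) :
    (BS n).Adj (π * bsGen n i * bsGen n j) (π * bsGen n j) := by
  rw [mul_assoc, h.eq, ← mul_assoc]
  exact (bs_adj_mul hi hin _).symm

/-- The pairs `i < j` of indices of commuting generators `b_i`, `b_j`. -/
def farPairs (n : ℕ) : Set (ℕ × ℕ) := {p | 0 < p.1 ∧ p.1 + 2 ≤ p.2 ∧ p.2 < n}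

theorem ncard_farPairs (n : ℕ) : (farPairs n).ncard = (n - 2) * (n - 3) / 2 := by
  have hshift : farPairs n = (fun x : ℕ × ℕ => (x.1 + 1, x.2 + 2)) ''
      ↑({x ∈ Finset.range (n - 2) ×ˢ Finset.range (n - 2) | x.1 < x.2} : Finset (ℕ × ℕ)) := by
    ext ⟨i, j⟩
    simp only [farPairs, Set.mem_ofPred_eq, Finset.coe_filter, Finset.mem_product,
      Finset.mem_range, Set.mem_image, Prod.mk.injEq, Prod.exists]
    constructor
    · rintro ⟨h1, h2, h3⟩
      exact ⟨i - 1, j - 2, by omega⟩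
    · rintro ⟨a, b, h, rfl, rfl⟩
      omega
  rw [hshift, Set.ncard_image_of_injective _ (fun x y h => by grind), Set.ncard_coe_finset,
    Finset.card_product_filter_lt, Finset.card_range, Nat.choose_two_right]
  rfl

variable {π : Perm (Fin n)} {p : ℕ × ℕ}

def bsSquare (π : Perm (Fin n)) (hp : p ∈ farPairs n) : (BS n).Subgraph :=
  have hi : 0 < p.1 := hp.1
  have hin : p.1 < n := by have := hp.2; omega
  have hj : 0 < p.2 := by have := hp.2; omega
  (Walk.square (bs_adj_mul hi hin π) (bs_adj_mul hj hp.2.2 _)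
    (bs_adj_mul_mul_of_commute hi hin (bsGen_commute hp.1 hp.2.1 hp.2.2) π)
    (bs_adj_mul hj hp.2.2 π).symm).toSubgraph

theorem ne_mul_bsGen_mul_bsGen (π : Perm (Fin n)) (hp : p ∈ farPairs n) :
    π ≠ π * bsGen n p.1 * bsGen n p.2 := by
  obtain ⟨hi, hij, hjn⟩ := hp
  rw [mul_assoc, ne_comm, Ne, mul_eq_left]
  exact bsGen_mul_bsGen_ne_one hi (by omega) (by omega) hjn (by omega)

theorem mul_bsGen_ne_mul_bsGen (π : Perm (Fin n)) (hp : p ∈ farPairs n) :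
    π * bsGen n p.1 ≠ π * bsGen n p.2 := by
  obtain ⟨hi, hij, hjn⟩ := hp
  rw [Ne, mul_left_cancel_iff, bsGen_inj hi (by omega) (by omega) hjn]
  omega

theorem isCycleSub_bsSquare (π : Perm (Fin n)) (hp : p ∈ farPairs n) :
    IsCycleSub (bsSquare π hp) 4 :=
  ⟨π, _, Walk.isCycle_square _ _ _ _ (ne_mul_bsGen_mul_bsGen π hp) (mul_bsGen_ne_mul_bsGen π hp),
    rfl, rfl⟩

theorem neighborSet_bsSquare (π : Perm (Fin n)) (hp : p ∈ farPairs n) :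
    (bsSquare π hp).neighborSet π = {π * bsGen n p.1, π * bsGen n p.2} :=
  Walk.neighborSet_toSubgraph_square _ _ _ _ (ne_mul_bsGen_mul_bsGen π hp)

theorem eq_of_bsSquare_eq {q : ℕ × ℕ} (hp : p ∈ farPairs n) (hq : q ∈ farPairs n)
    (h : bsSquare π hp = bsSquare π hq) : p = q := by
  have hnbr := congrArg (·.neighborSet π) h
  simp only [neighborSet_bsSquare, Set.pair_eq_pair_iff, mul_left_cancel_iff] at hnbr
  obtain ⟨hi, hij, hjn⟩ := hp
  obtain ⟨hi', hij', hjn'⟩ := hq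
  rw [bsGen_inj hi (by omega) hi' (by omega), bsGen_inj hi (by omega) (by omega) hjn',
    bsGen_inj (by omega) hjn hi' (by omega), bsGen_inj (by omega) hjn (by omega) hjn'] at hnbr
  exact Prod.ext_iff.2 (by omega)

theorem exists_mem_farPairs_of_square {q r s : Perm (Fin n)} (hpq : (BS n).Adj π q)
    (hqr : (BS n).Adj q r) (hrs : (BS n).Adj r s) (hsp : (BS n).Adj s π) (hpr : π ≠ r)
    (hqs : q ≠ s) :
    ∃ p ∈ farPairs n, r = π * bsGen n p.1 * bsGen n p.2 ∧
      (q = π * bsGen n p.1 ∧ s = π * bsGen n p.2 ∨ q = π * bsGen n p.2 ∧ s = π * bsGen n p.1) := by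
  obtain ⟨a, ha, han, rfl⟩ := hpq
  obtain ⟨b, hb, hbn, rfl⟩ := hqr
  obtain ⟨c, hc, hcn, rfl⟩ := hrs
  obtain ⟨d, hd, hdn, hπ⟩ := hsp
  have hs : π * bsGen n d = π * bsGen n a * bsGen n b * bsGen n c := by
    nth_rw 1 [hπ]
    rw [mul_assoc _ (bsGen n d), bsGen_mul_self, mul_one]
  have hrel : bsGen n a * bsGen n b = bsGen n d * bsGen n c := by
    rw [← mul_left_cancel_iff (a := π), ← mul_assoc, ← mul_assoc, hs, mul_assoc _ (bsGen n c),
      bsGen_mul_self, mul_one]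
  have hcd : c ≠ d := by
    rintro rfl
    rw [bsGen_mul_self] at hrel
    exact hpr (by rw [mul_assoc, hrel, mul_one])
  have had : a ≠ d := by
    rintro rfl
    exact hqs hs
  obtain ⟨rfl, hca, hfar⟩ := eq_of_bsGen_mul_bsGen_eq ha han hb hbn hc hcn hd hdn hcd had hrel
  subst c
  rcases hfar with h | h
  · exact ⟨(a, b), ⟨ha, h, hbn⟩, rfl, Or.inl ⟨rfl, hs.symm⟩⟩
  · exact ⟨(b, a), ⟨hb, h, han⟩, by rw [mul_assoc, hrel, ← mul_assoc], Or.inr ⟨rfl, hs.symm⟩⟩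

theorem exists_bsSquare_eq {H : (BS n).Subgraph} (hH : IsCycleSub H 4) (hπ : π ∈ H.verts) :
    ∃ p, ∃ hp : p ∈ farPairs n, bsSquare π hp = H := by
  obtain ⟨u, w, hw, h4, rfl⟩ := hH
  obtain ⟨q, r, s, hpq, hqr, hrs, hsp, hpr, hqs, hsq⟩ :=
    hw.exists_square h4 (w.mem_verts_toSubgraph.1 hπ)
  rw [hsq]
  obtain ⟨p, hp, rfl, ⟨rfl, rfl⟩ | ⟨rfl, rfl⟩⟩ :=
    exists_mem_farPairs_of_square hpq hqr hrs hsp hpr hqs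
  · exact ⟨p, hp, rfl⟩
  · exact ⟨p, hp, by rw [Walk.toSubgraph_square_comm]; rfl⟩

end BubbleSort

theorem bs_four_cycles_through_vertex_general (n : ℕ) (π : Equiv.Perm (Fin n)) :
    {H : (BS n).Subgraph | IsCycleSub H 4 ∧ π ∈ H.verts}.ncard = (n - 2) * (n - 3) / 2 := by
  rw [← ncard_farPairs]
  symm
  refine Set.ncard_congr (fun _ hp => bsSquare π hp)
    (fun _ hp => ⟨isCycleSub_bsSquare π hp, Walk.start_mem_verts_toSubgraph _⟩)
    (fun _ _ hp hq => eq_of_bsSquare_eq hp hq) ?_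
  rintro H ⟨hH, hπ⟩
  exact exists_bsSquare_eq hH hπ

/-- each vertex of `BS_n`, `n ≥ 4`, lies on exactly `(n-2)(n-3)/2`
distinct 4-cycles. -/
theorem bs_four_cycles_through_vertex (n : ℕ) (hn : 4 ≤ n) (π : Equiv.Perm (Fin n)) :
    {H : (BS n).Subgraph | IsCycleSub H 4 ∧ π ∈ H.verts}.ncard = (n - 2) * (n - 3) / 2 :=
  bs_four_cycles_through_vertex_general n π
end

section
/- For every n ≥ 3, the n-prism, i.e. the box (Cartesian) product C_n □ K_2 of the cycle graph on n vertices with the complete graph on 2 vertices, is Hamilton-connected if and only if n is odd. -/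
/-!
For even `n` the prism is bipartite (colour `(i, s)` by the parity of `i + s`) and has `2n`
vertices, so a Hamiltonian path has an odd number of edges and joins vertices of different
colours: `(0, 0)` and `(1, 1)` are not joined by one.

For odd `n`, rotations and the swap of the two layers act transitively on the vertices, so it
suffices to start at `(0, 0)`. For every `k < n` there is a Hamiltonian path from `(0, 0)` to
`(k, k + 1)` using ladder edges only: zigzag through the columns `0, …, k - 1`, run along one
layer up to column `n - 1`, cross, and come back along the other layer to column `k`. The remaining
targets `(i, i)` with `i ≠ 0` are the images of `(n - i, n - i + 1)` under the reflection
`i ↦ -i`; this is where the parity of `n` enters, second coordinates being read mod 2.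
-/

open SimpleGraph Fin.NatCast

lemma Fin.two_eq_or_eq_add_one (s t : Fin 2) : s = t ∨ s = t + 1 := by decide +revert

namespace SimpleGraph

variable {V W : Type*} {G : SimpleGraph V} {H : SimpleGraph W}

def IsHamiltonConnected [DecidableEq V] (G : SimpleGraph V) : Prop :=
  ∀ u v, u ≠ v → ∃ p : G.Walk u v, p.IsHamiltonian

theorem Walk.exists_isHamiltonian_of_isChain [Fintype V] [DecidableEq V] {u v : V} {l : List V}
    (hchain : l.IsChain G.Adj) (hnodup : l.Nodup) (hlen : l.length = Fintype.card V)
    (hhead : l.head? = some u) (hlast : l.getLast? = some v) :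
    ∃ p : G.Walk u v, p.IsHamiltonian := by
  have hne : l ≠ [] := by rintro rfl; simp at hhead
  obtain rfl : l.head hne = u := by simpa [List.head?_eq_some_head hne] using hhead
  obtain rfl : l.getLast hne = v := by
    simpa [List.getLast?_eq_getLast_of_ne_nil hne] using hlast
  refine ⟨Walk.ofSupport l hne hchain, ?_⟩
  rw [Walk.isHamiltonian_iff_isPath_and_length_eq, Walk.isPath_def, Walk.support_ofSupport,
    Walk.length_ofSupport, hlen]
  exact ⟨hnodup, rfl⟩

theorem Iso.exists_isHamiltonian [DecidableEq V] [DecidableEq W] (e : G ≃g H) {u v : V}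
    {p : G.Walk u v} (hp : p.IsHamiltonian) : ∃ q : H.Walk (e u) (e v), q.IsHamiltonian :=
  ⟨p.map e.toHom, hp.map e.toHom e.bijective⟩

theorem isHamiltonConnected_of_exists_iso [DecidableEq V] (v₀ : V)
    (htrans : ∀ u, ∃ e : G ≃g G, e v₀ = u)
    (hpath : ∀ v, v ≠ v₀ → ∃ p : G.Walk v₀ v, p.IsHamiltonian) :
    G.IsHamiltonConnected := by
  intro u v huv
  obtain ⟨e, rfl⟩ := htrans u
  obtain ⟨w, rfl⟩ := e.surjective v
  obtain ⟨p, hp⟩ := hpath w (fun h => huv (h ▸ rfl))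
  exact e.exists_isHamiltonian hp

def Coloring.boxProd (c : G.Coloring Bool) (d : H.Coloring Bool) : (G □ H).Coloring Bool :=
  Coloring.mk (fun x => xor (c x.1) (d x.2)) fun {x y} h => by
    rcases boxProd_adj.1 h with ⟨hG, h2⟩ | ⟨hH, h1⟩
    · simpa [h2] using c.valid hG
    · simpa [h1] using d.valid hH

theorem Coloring.not_isHamiltonConnected [Fintype V] [DecidableEq V] (c : G.Coloring Bool)
    (hcard : Even (Fintype.card V)) {u v : V} (huv : u ≠ v) (hc : c u = c v) :
    ¬ G.IsHamiltonConnected := by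
  intro hG
  obtain ⟨p, hp⟩ := hG u v huv
  have hpos : 0 < Fintype.card V := Fintype.card_pos_iff.2 ⟨u⟩
  have hodd : Odd p.length := by
    rw [hp.length_eq]
    exact Nat.Even.sub_odd hpos hcard odd_one
  exact not_iff_self (hc ▸ (c.odd_length_iff_not_congr p).1 hodd)

lemma cycleGraph_adj_natCast_succ {n : ℕ} [NeZero n] (hn : 2 ≤ n) (i : ℕ) :
    (cycleGraph n).Adj (i : Fin n) ((i + 1 : ℕ) : Fin n) := by
  rw [cycleGraph_adj']
  right
  rw [Nat.cast_succ, add_sub_cancel_left, Fin.val_one', Nat.one_mod_eq_one.2 (by omega)]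

end SimpleGraph

namespace Ladder

def snake : ℕ → List (ℕ × Fin 2)
  | 0 => []
  | k + 1 => snake k ++ [(k, (k : Fin 2)), (k, (k : Fin 2) + 1)]

def row (a b : ℕ) (s : Fin 2) : List (ℕ × Fin 2) :=
  (List.Ico a b).map (·, s)

def path (n k : ℕ) : List (ℕ × Fin 2) :=
  snake k ++ row k n k ++ (row k n (k + 1)).reverse

/-- The infinite ladder `P_∞ □ K₂`. Indexing its columns by `ℕ` keeps wrap-around arithmetic
out of the construction of paths, which are only cast to `Fin n` at the end. -/
abbrev graph : SimpleGraph (ℕ × Fin 2) := hasse ℕ □ ⊤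

lemma graph_adj_succ (i : ℕ) (s : Fin 2) : graph.Adj (i, s) (i + 1, s) := by
  simp [boxProd_adj, hasse_adj, Nat.covBy_iff_add_one_eq]

lemma graph_adj_rung (i : ℕ) (s : Fin 2) : graph.Adj (i, s) (i, s + 1) := by
  simp [boxProd_adj]

lemma length_snake (k : ℕ) : (snake k).length = 2 * k := by
  induction k with
  | zero => rfl
  | succ k ih => simp only [snake, List.length_append, ih, List.length_cons, List.length_nil]; ring

lemma mem_snake {x : ℕ × Fin 2} {k : ℕ} : x ∈ snake k ↔ x.1 < k := by
  induction k with
  | zero => simp [snake]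
  | succ k ih =>
    obtain ⟨i, s⟩ := x
    simp only [snake, List.mem_append, ih, List.mem_cons, Prod.mk.injEq, List.not_mem_nil,
      or_false]
    constructor
    · rintro (h | ⟨rfl, -⟩ | ⟨rfl, -⟩) <;> omega
    · intro h
      rcases Nat.lt_succ_iff_lt_or_eq.1 h with h | rfl
      · exact Or.inl h
      · exact Or.inr ((Fin.two_eq_or_eq_add_one s i).imp (⟨rfl, ·⟩) (⟨rfl, ·⟩))

lemma mem_row {x : ℕ × Fin 2} {a b : ℕ} {s : Fin 2} :
    x ∈ row a b s ↔ a ≤ x.1 ∧ x.1 < b ∧ x.2 = s := by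
  obtain ⟨i, t⟩ := x
  simp only [row, List.mem_map, List.Ico.mem, Prod.mk.injEq]
  constructor
  · rintro ⟨j, hj, rfl, rfl⟩; exact ⟨hj.1, hj.2, rfl⟩
  · rintro ⟨h1, h2, rfl⟩; exact ⟨i, ⟨h1, h2⟩, rfl, rfl⟩

lemma nodup_snake (k : ℕ) : (snake k).Nodup := by
  induction k with
  | zero => simp [snake]
  | succ k ih =>
    refine ih.append (by simp) fun x hx hx' => ?_
    rw [mem_snake] at hx
    simp only [List.mem_cons, List.not_mem_nil, or_false] at hx'
    rcases hx' with rfl | rfl <;> exact lt_irrefl k hx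

lemma nodup_row (a b : ℕ) (s : Fin 2) : (row a b s).Nodup :=
  (List.Ico.nodup ..).map fun _ _ h => congrArg Prod.fst h

lemma getLast?_snake (k : ℕ) : (snake (k + 1)).getLast? = some (k, (k : Fin 2) + 1) := by
  simp [snake]

lemma head?_snake (k : ℕ) : (snake (k + 1)).head? = some (0, 0) := by
  induction k with
  | zero => simp [snake]
  | succ k ih => rw [snake, List.head?_append, ih]; rfl

lemma isChain_snake (k : ℕ) : (snake k).IsChain graph.Adj := by
  induction k with
  | zero => simp [snake]
  | succ k ih =>
    refine ih.append (List.isChain_pair.2 (graph_adj_rung _ _)) fun x hx y hy => ?_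
    cases k with
    | zero => simp [snake] at hx
    | succ k =>
      rw [getLast?_snake] at hx
      simp only [Option.mem_def, Option.some.injEq, List.head?_cons] at hx hy
      subst hx hy
      rw [Nat.cast_succ]
      exact graph_adj_succ k _

lemma isChain_row (a b : ℕ) (s : Fin 2) : (row a b s).IsChain graph.Adj :=
  List.isChain_map_of_isChain _ (fun i _ h => h ▸ graph_adj_succ i s) (List.Ico.isChain_succ a b)

lemma head?_row {a b : ℕ} (h : a < b) (s : Fin 2) : (row a b s).head? = some (a, s) := by
  simp [row, List.Ico.eq_cons h]

lemma getLast?_row {a b : ℕ} (h : a < b + 1) (s : Fin 2) :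
    (row a (b + 1) s).getLast? = some (b, s) := by
  simp [row, List.Ico.succ_top (Nat.le_of_lt_succ h)]

lemma length_path {n k : ℕ} (hk : k ≤ n) : (path n k).length = 2 * n := by
  simp only [path, List.length_append, length_snake, row, List.length_map, List.Ico.length,
    List.length_reverse]
  omega

lemma fst_lt_of_mem_path {n k : ℕ} (hk : k ≤ n) {x : ℕ × Fin 2} (hx : x ∈ path n k) :
    x.1 < n := by
  simp only [path, List.mem_append, List.mem_reverse, mem_snake, mem_row] at hx
  omega

lemma nodup_path (n k : ℕ) : (path n k).Nodup := by
  refine ((nodup_snake k).append (nodup_row ..) fun x hx hx' => ?_).append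
    (List.nodup_reverse.2 (nodup_row ..)) fun x hx hx' => ?_
  · rw [mem_snake] at hx; rw [mem_row] at hx'; omega
  · rw [List.mem_reverse, mem_row] at hx'
    simp only [List.mem_append, mem_snake, mem_row] at hx
    rcases hx with hx | hx
    · omega
    · exact left_ne_add.2 one_ne_zero (hx.2.2.symm.trans hx'.2.2)

lemma head?_path {n k : ℕ} (hk : k < n) : (path n k).head? = some (0, 0) := by
  cases k with
  | zero => simp [path, snake, head?_row hk]
  | succ k => simp [path, List.head?_append, head?_snake]

lemma getLast?_path {n k : ℕ} (hk : k < n) :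
    (path n k).getLast? = some (k, (k : Fin 2) + 1) := by
  simp [path, List.getLast?_append, List.getLast?_reverse, head?_row hk]

lemma isChain_path {n k : ℕ} (hk : k < n) : (path n k).IsChain graph.Adj := by
  obtain ⟨m, rfl⟩ : ∃ m, n = m + 1 := ⟨n - 1, by omega⟩
  refine ((isChain_snake k).append (isChain_row ..) fun x hx y hy => ?_).append
    (List.isChain_reverse.2 ((isChain_row ..).imp fun _ _ h => h.symm)) fun x hx y hy => ?_
  · cases k with
    | zero => simp [snake] at hx
    | succ k =>
      rw [getLast?_snake] at hx
      rw [head?_row hk] at hy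
      simp only [Option.mem_def, Option.some.injEq] at hx hy
      subst hx hy
      rw [Nat.cast_succ]
      exact graph_adj_succ k _
  · rw [List.getLast?_append, getLast?_row hk] at hx
    rw [List.head?_reverse, getLast?_row hk] at hy
    simp only [Option.some_or, Option.mem_def, Option.some.injEq] at hx hy
    subst hx hy
    exact graph_adj_rung _ _

end Ladder

abbrev prismGraph (n : ℕ) : SimpleGraph (Fin n × Fin 2) := cycleGraph n □ ⊤

namespace prismGraph

variable {n : ℕ} [NeZero n]

def ofLadder (hn : 2 ≤ n) : Ladder.graph →g prismGraph n where
  toFun x := (x.1, x.2)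
  map_rel' := by
    rintro ⟨i, s⟩ ⟨j, t⟩ h
    rcases boxProd_adj.1 h with ⟨hij, rfl⟩ | ⟨hst, rfl⟩
    · simp only [hasse_adj, Nat.covBy_iff_add_one_eq] at hij
      refine boxProd_adj_left.2 ?_
      rcases hij with rfl | rfl
      · exact cycleGraph_adj_natCast_succ hn i
      · exact (cycleGraph_adj_natCast_succ hn j).symm
    · exact boxProd_adj_right.2 hst

def translate (a : Fin n × Fin 2) : prismGraph n ≃g prismGraph n where
  toEquiv := Equiv.addRight a
  map_rel_iff' := by simp [boxProd_adj, cycleGraph_adj']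

def reflect : prismGraph n ≃g prismGraph n where
  toEquiv := (Equiv.neg _).prodCongr (Equiv.refl _)
  map_rel_iff' := by
    intro x y
    simp only [boxProd_adj, cycleGraph_adj', Equiv.prodCongr_apply, Prod.map, Equiv.neg_apply,
      Equiv.refl_apply, neg_sub_neg, neg_inj]
    tauto

lemma reflect_natCast_sub (hodd : Odd n) (i : Fin n) :
    reflect (((n - i : ℕ) : Fin n), ((n - i : ℕ) : Fin 2) + 1) = (i, (i : Fin 2)) := by
  refine Prod.ext ?_ ?_
  · change -((n - i : ℕ) : Fin n) = i
    rw [neg_eq_iff_add_eq_zero, Fin.ext_iff, Fin.val_add, Fin.val_natCast]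
    simp
  · change ((n - i : ℕ) : Fin 2) + 1 = (i : Fin 2)
    rw [Fin.ext_iff, Fin.val_add, Fin.val_natCast, Fin.val_natCast, Fin.val_one]
    have := Nat.odd_iff.1 hodd
    omega

lemma ofLadder_injOn (hn : 2 ≤ n) {x y : ℕ × Fin 2} (hx : x.1 < n) (hy : y.1 < n)
    (hxy : ofLadder hn x = ofLadder hn y) : x = y := by
  simp only [ofLadder, RelHom.coeFn_mk, Prod.mk.injEq] at hxy
  refine Prod.ext ?_ hxy.2
  simpa [Fin.val_cast_of_lt hx, Fin.val_cast_of_lt hy] using congrArg Fin.val hxy.1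

theorem exists_isHamiltonian_from_zero (hn : 2 ≤ n) {k : ℕ} (hk : k < n) :
    ∃ p : (prismGraph n).Walk (0, 0) (k, (k : Fin 2) + 1), p.IsHamiltonian := by
  refine Walk.exists_isHamiltonian_of_isChain (l := (Ladder.path n k).map (ofLadder hn))
    ((List.isChain_map _).2 ((Ladder.isChain_path hk).imp fun _ _ h => (ofLadder hn).map_adj h))
    ((Ladder.nodup_path n k).map_on fun x hx y hy => ofLadder_injOn hn
      (Ladder.fst_lt_of_mem_path hk.le hx) (Ladder.fst_lt_of_mem_path hk.le hy)) ?_ ?_ ?_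
  · simp [Ladder.length_path hk.le, mul_comm]
  · simp [Ladder.head?_path hk, ofLadder]
  · simp [Ladder.getLast?_path hk, ofLadder]

theorem not_isHamiltonConnected_of_even (hn : 2 ≤ n) (heven : Even n) :
    ¬ (prismGraph n).IsHamiltonConnected := by
  let layer : (⊤ : SimpleGraph (Fin 2)).Coloring Bool := Coloring.mk (· = 0) (by decide)
  exact ((cycleGraph.bicoloring_of_even n heven).boxProd layer).not_isHamiltonConnected
    (u := (⟨0, by omega⟩, 0)) (v := (⟨1, by omega⟩, 1)) (by simp) (by simp) rfl

theorem isHamiltonConnected_of_odd (hn : 2 ≤ n) (hodd : Odd n) :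
    (prismGraph n).IsHamiltonConnected := by
  refine isHamiltonConnected_of_exists_iso (0, 0)
    (fun u => ⟨translate u, by simp [translate]⟩) ?_
  rintro ⟨i, t⟩ hv
  rcases Fin.two_eq_or_eq_add_one t i.val with rfl | rfl
  · have hi : i.val ≠ 0 := fun h => hv (by simp [Fin.ext_iff, h])
    obtain ⟨p, hp⟩ := exists_isHamiltonian_from_zero hn (k := n - i) (by omega)
    have h0 : reflect ((0 : Fin n), (0 : Fin 2)) = (0, 0) := by simp [reflect]
    have := reflect.exists_isHamiltonian hp
    rwa [h0, reflect_natCast_sub hodd] at this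
  · have := exists_isHamiltonian_from_zero hn i.is_lt
    rwa [Fin.cast_val_eq_self] at this

end prismGraph

/-- for `n ≥ 3`, the `n`-prism `C_n □ K_2` is Hamilton-connected
(every two distinct vertices are joined by a Hamiltonian path) iff `n` is odd. -/
theorem prism_hamilton_connected_iff_odd (n : ℕ) (hn : 3 ≤ n) :
    (∀ u v : Fin n × Fin 2, u ≠ v →
        ∃ p : (SimpleGraph.cycleGraph n □ (⊤ : SimpleGraph (Fin 2))).Walk u v,
          p.IsHamiltonian) ↔ Odd n := by
  have : NeZero n := ⟨by omega⟩
  refine ⟨fun h => ?_, prismGraph.isHamiltonConnected_of_odd (by omega)⟩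
  by_contra hodd
  exact prismGraph.not_isHamiltonConnected_of_even (by omega) (Nat.not_odd_iff_even.1 hodd) h
end
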